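/- Let (X,Φ) be an expansive topological flow without fixed points. Then there exist a finite set A, a subshift Λ ⊂ A^ℤ with shift σ, and a continuous function f : Λ → (0,∞) such that (X,Φ) is a topological factor of the suspension flow (Λ_f,Ψ) of σ under f: there is a continuous surjection π : Λ_f → X with π∘Ψ_t = Φ_t∘π for all t ∈ ℝ. -/

import Mathlib

open Set Topology

/-- A topological flow. -/
structure IsFlow (X : Type*) [TopologicalSpace X] (φ : ℝ → X → X) : Prop where
  cont : Continuous fun p : X × ℝ => φ p.2 p.1
  map_zero : ∀ x : X, φ 0 x = x
  map_add : ∀ s t : ℝ, ∀ x : X, φ (s + t) x = φ s (φ t x)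

variable {X : Type*}

/-- A fixed point of the flow. -/
def IsFixedPoint (φ : ℝ → X → X) (x : X) : Prop := ∀ t : ℝ, φ t x = x

/-- Expansiveness for flows (Bowen–Walters). -/
def IsExpansive [MetricSpace X] (φ : ℝ → X → X) : Prop :=
  ∀ ε : ℝ, 0 < ε → ∃ δ : ℝ, 0 < δ ∧ ∀ (x y : X) (s : ℝ → ℝ), Continuous s → s 0 = 0 →
    (∀ t : ℝ, dist (φ t x) (φ (s t) y) < δ) → ∃ t : ℝ, |t| < ε ∧ y = φ t x

/-!
Bowen–Walters' argument. Without fixed points, compactness gives `T`, `ρ`, `R > 0` such that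
every `z` has a time `τ`, `|τ| ≤ T`, for which `φ τ` pushes each point of the `R`-ball about `z`
a further `ρ` away from `z`. Then `V y = ∫₀^τ dist (φ s y) z ds` grows at rate at least `ρ` along
orbit pieces in that ball, so small pieces of the level set `{V = V z}` are cross-sections.
Finitely many of them are met by every orbit within time `[β, 3β]` in both directions, are never
revisited within time `2β`, and have small diameters and nearly constant transit times.

An itinerary of `x` records the successive crossing times `t n` and sections `q n`. Following two
orbits with the same `q` along the piecewise affine reparametrisation matching their crossing
times keeps them close, so by expansiveness `q` determines `x` and `t`. The subshift `Λ` is the set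
of itineraries, `p q` the point and `f q = t 1` the first return time; `p` and `f` are continuous
because the set of triples `(q, x, t)` is compact and is the graph of `q ↦ (p q, t)`.
-/

theorem exists_fin_cover_of_isOpen [TopologicalSpace X] [CompactSpace X] {U : X → Set X}
    (hU : ∀ x, IsOpen (U x)) (hmem : ∀ x, x ∈ U x) :
    ∃ (N : ℕ) (z : Fin N → X), ∀ y, ∃ i, y ∈ U (z i) := by
  obtain ⟨F, hF⟩ :=
    isCompact_univ.elim_finite_subcover U hU fun x _ => mem_iUnion.mpr ⟨x, hmem x⟩
  refine ⟨F.card, fun i => F.equivFin.symm i, fun y => ?_⟩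
  obtain ⟨x, hxF, hy⟩ : ∃ x ∈ F, y ∈ U x := by simpa using hF (mem_univ y)
  exact ⟨F.equivFin ⟨x, hxF⟩, by simpa using hy⟩

theorem continuousOn_fst_image_of_isCompact {α β : Type*} [TopologicalSpace α] [T2Space α]
    [TopologicalSpace β] {Ω : Set (α × β)} (hΩ : IsCompact Ω) {g : α → β}
    (hg : ∀ a b, (a, b) ∈ Ω → g a = b) : ContinuousOn g (Prod.fst '' Ω) := by
  refine continuousOn_iff_isClosed.mpr fun C hC =>
    ⟨Prod.fst '' (Ω ∩ Prod.snd ⁻¹' C),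
      ((hΩ.inter_right (hC.preimage continuous_snd)).image continuous_fst).isClosed, ?_⟩
  ext a
  constructor
  · rintro ⟨haC, ⟨a, b⟩, hab, rfl⟩
    exact ⟨⟨(a, b), ⟨hab, hg a b hab ▸ haC⟩, rfl⟩, ⟨(a, b), hab, rfl⟩⟩
  · rintro ⟨⟨⟨a, b⟩, ⟨hab, hbC⟩, rfl⟩, ha⟩
    exact ⟨(hg a b hab).symm ▸ hbC, ha⟩

section IntSequence

variable {t : ℤ → ℝ} {β : ℝ}

theorem mul_sub_le_sub_of_le_sub_succ (hg : ∀ n, β ≤ t (n + 1) - t n) {m n : ℤ} (hmn : m ≤ n) :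
    β * (n - m) ≤ t n - t m := by
  induction n, hmn using Int.leInduction with
  | base => simp
  | succ n hmn ih => push_cast; linarith [hg n]

theorem abs_sub_le_mul_sub_of_abs_sub_succ_le {C : ℝ} (hg : ∀ n, |t (n + 1) - t n| ≤ C)
    {m n : ℤ} (hmn : m ≤ n) : |t n - t m| ≤ C * (n - m) := by
  have h1 := mul_sub_le_sub_of_le_sub_succ (β := -C) (fun k => (abs_le.mp (hg k)).1) hmn
  have h2 := mul_sub_le_sub_of_le_sub_succ (t := -t) (β := -C)
    (fun k => by simp only [Pi.neg_apply]; linarith [(abs_le.mp (hg k)).2]) hmn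
  simp only [Pi.neg_apply] at h2
  exact abs_le.mpr ⟨by linarith, by linarith⟩

theorem abs_le_mul_abs_of_abs_sub_succ_le {C : ℝ} (h0 : t 0 = 0)
    (hg : ∀ n, |t (n + 1) - t n| ≤ C) (n : ℤ) : |t n| ≤ C * |(n : ℝ)| := by
  rcases le_total 0 n with hn | hn
  · simpa [h0, abs_of_nonneg (Int.cast_nonneg_iff.mpr hn)] using
      abs_sub_le_mul_sub_of_abs_sub_succ_le hg hn
  · simpa [h0, abs_of_nonpos (Int.cast_nonpos.mpr hn : (n : ℝ) ≤ 0)] using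
      abs_sub_le_mul_sub_of_abs_sub_succ_le hg hn

theorem strictMono_of_le_sub_succ (hβ : 0 < β) (hg : ∀ n, β ≤ t (n + 1) - t n) : StrictMono t :=
  strictMono_int_of_lt_succ fun n => by linarith [hg n]

theorem eq_of_mem_Ico_of_strictMono (ht : StrictMono t) {u : ℝ} {m n : ℤ}
    (hm : u ∈ Ico (t m) (t (m + 1))) (hn : u ∈ Ico (t n) (t (n + 1))) : m = n := by
  by_contra hne
  rcases lt_or_gt_of_ne hne with h | h
  · linarith [hm.2, hn.1, ht.monotone (show m + 1 ≤ n by omega)]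
  · linarith [hn.2, hm.1, ht.monotone (show n + 1 ≤ m by omega)]

theorem exists_mem_Ico_of_le_sub_succ (hβ : 0 < β) (hg : ∀ n, β ≤ t (n + 1) - t n) (u : ℝ) :
    ∃ n, u ∈ Ico (t n) (t (n + 1)) := by
  obtain ⟨b, hb⟩ := exists_nat_gt (|u - t 0| / β)
  rw [div_lt_iff₀ hβ] at hb
  have hbdd : ∀ n, t n ≤ u → n ≤ b := fun n hn => by
    by_contra! hbn
    have h1 := mul_sub_le_sub_of_le_sub_succ hg (show 0 ≤ n by omega)
    have h2 : (b : ℝ) < n := by exact_mod_cast hbn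
    push_cast at h1
    nlinarith [le_abs_self (u - t 0)]
  have hne : t (-b) ≤ u := by
    have h1 := mul_sub_le_sub_of_le_sub_succ hg (show -(b : ℤ) ≤ 0 by omega)
    push_cast at h1
    linarith [neg_abs_le (u - t 0)]
  obtain ⟨n, hn, hmax⟩ := Int.exists_greatest_of_bdd ⟨b, hbdd⟩ ⟨-b, hne⟩
  exact ⟨n, hn, not_le.mp fun h => by have := hmax (n + 1) h; omega⟩

end IntSequence

section Interpolation

variable {β : ℝ} {t t' : ℤ → ℝ} {n : ℤ}

noncomputable def affineStep (t t' : ℤ → ℝ) (n : ℤ) (u : ℝ) : ℝ :=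
  t' n + (u - t n) / (t (n + 1) - t n) * (t' (n + 1) - t' n)

theorem affineStep_self : affineStep t t' n (t n) = t' n := by
  simp [affineStep]

theorem affineStep_succ (h : t n < t (n + 1)) : affineStep t t' n (t (n + 1)) = t' (n + 1) := by
  rw [affineStep, div_self (sub_pos.mpr h).ne']
  ring

theorem monotone_affineStep (h : t n < t (n + 1)) (h' : t' n ≤ t' (n + 1)) :
    Monotone (affineStep t t' n) := fun u v huv => by
  unfold affineStep
  gcongr

theorem continuous_of_eqOn_affineStep (hβ : 0 < β) (hg : ∀ n, β ≤ t (n + 1) - t n)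
    (hg' : ∀ n, β ≤ t' (n + 1) - t' n) {s : ℝ → ℝ}
    (hs : ∀ n, EqOn s (affineStep t t' n) (Ico (t n) (t (n + 1)))) : Continuous s := by
  have ht := strictMono_of_le_sub_succ hβ hg
  have ht' := strictMono_of_le_sub_succ hβ hg'
  have hL : ∀ n, Monotone (affineStep t t' n) :=
    fun n => monotone_affineStep (ht (lt_add_one n)) (ht' (lt_add_one n)).le
  have hmono : Monotone s := by
    intro u v huv
    obtain ⟨m, hm⟩ := exists_mem_Ico_of_le_sub_succ hβ hg u
    obtain ⟨n, hn⟩ := exists_mem_Ico_of_le_sub_succ hβ hg v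
    rw [hs m hm, hs n hn]
    rcases lt_trichotomy m n with hmn | rfl | hnm
    · calc affineStep t t' m u ≤ affineStep t t' m (t (m + 1)) := hL m hm.2.le
        _ = t' (m + 1) := affineStep_succ (ht (lt_add_one m))
        _ ≤ t' n := ht'.monotone (by omega)
        _ = affineStep t t' n (t n) := affineStep_self.symm
        _ ≤ affineStep t t' n v := hL n hn.1
    · exact hL m huv
    · linarith [hm.1, hn.2, ht.monotone (show n + 1 ≤ m by omega)]
  refine hmono.continuous_of_surjective fun w => ?_
  obtain ⟨m, hm⟩ := exists_mem_Ico_of_le_sub_succ hβ hg' w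
  have hpos := hβ.trans_le (hg m)
  have hpos' := hβ.trans_le (hg' m)
  set r := (w - t' m) / (t' (m + 1) - t' m)
  have hr : r ∈ Ico 0 1 := ⟨div_nonneg (by linarith [hm.1]) hpos'.le,
    (div_lt_one hpos').mpr (by linarith [hm.2])⟩
  refine ⟨t m + r * (t (m + 1) - t m), ?_⟩
  rw [hs m ⟨by nlinarith [hr.1], by nlinarith [hr.2]⟩, affineStep]
  simp only [r]
  field_simp
  ring

theorem exists_continuous_eqOn_affineStep (hβ : 0 < β) (hg : ∀ n, β ≤ t (n + 1) - t n)
    (hg' : ∀ n, β ≤ t' (n + 1) - t' n) :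
    ∃ s : ℝ → ℝ, Continuous s ∧ ∀ n, EqOn s (affineStep t t' n) (Ico (t n) (t (n + 1))) := by
  choose idx hidx using exists_mem_Ico_of_le_sub_succ hβ hg
  have hs : ∀ n,
      EqOn (fun u => affineStep t t' (idx u) u) (affineStep t t' n) (Ico (t n) (t (n + 1))) :=
    fun n u hu => by
      simp only [eq_of_mem_Ico_of_strictMono (strictMono_of_le_sub_succ hβ hg) (hidx u) hu]
  exact ⟨_, continuous_of_eqOn_affineStep hβ hg hg' hs, hs⟩

theorem abs_sub_div_mul_le {a g g' : ℝ} (hg : 0 < g) (ha : a ∈ Icc 0 g) :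
    |a - a / g * g'| ≤ |g' - g| := by
  have : a - a / g * g' = -(a / g * (g' - g)) := by field_simp; ring
  rw [this, abs_neg, abs_mul, abs_of_nonneg (div_nonneg ha.1 hg.le)]
  exact mul_le_of_le_one_left (abs_nonneg _) ((div_le_one hg).mpr ha.2)

end Interpolation

namespace IsFlow

variable {φ : ℝ → X → X}

section Topological

variable [TopologicalSpace X]

theorem continuous_timeMap (hφ : IsFlow X φ) (t : ℝ) : Continuous (φ t) :=
  hφ.cont.comp (continuous_id.prodMk continuous_const)

theorem continuous_orbit (hφ : IsFlow X φ) (x : X) : Continuous fun t : ℝ => φ t x :=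
  hφ.cont.comp (continuous_const.prodMk continuous_id)

theorem apply_sub_apply (hφ : IsFlow X φ) (a b : ℝ) (x : X) : φ (b - a) (φ a x) = φ b x := by
  rw [← hφ.map_add, sub_add_cancel]

end Topological

section Compact

variable [MetricSpace X] [CompactSpace X]

theorem exists_pos_dist_apply_lt (hφ : IsFlow X φ) (C ε : ℝ) (hε : 0 < ε) :
    ∃ η > 0, ∀ (x y : X) (s u : ℝ), |s| ≤ C → |u| ≤ C → dist x y ≤ η → |s - u| ≤ η →
      dist (φ s x) (φ u y) < ε := by
  have hK : IsCompact (univ ×ˢ Icc (-C) C : Set (X × ℝ)) := isCompact_univ.prod isCompact_Icc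
  obtain ⟨d, hd, hd'⟩ := Metric.uniformContinuousOn_iff.mp
    (hK.uniformContinuousOn_of_continuous hφ.cont.continuousOn) ε hε
  refine ⟨d / 2, half_pos hd, fun x y s u hs hu hxy hsu => ?_⟩
  refine hd' (x, s) ⟨mem_univ _, abs_le.mp hs⟩ (y, u) ⟨mem_univ _, abs_le.mp hu⟩ ?_
  rw [Prod.dist_eq, Real.dist_eq]
  exact max_lt (by linarith) (by linarith)

theorem exists_pos_dist_apply_lt_of_dist_le (hφ : IsFlow X φ) (C ε : ℝ) (hε : 0 < ε) :
    ∃ η > 0, ∀ (x y : X), dist x y ≤ η → ∀ s : ℝ, |s| ≤ C → dist (φ s x) (φ s y) < ε := by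
  obtain ⟨η, hη, h⟩ := hφ.exists_pos_dist_apply_lt C ε hε
  exact ⟨η, hη, fun x y hxy s hs => h x y s s hs hs hxy (by simpa using hη.le)⟩

theorem exists_pos_dist_apply_lt_of_abs_sub_le (hφ : IsFlow X φ) (C ε : ℝ) (hε : 0 < ε) :
    ∃ η > 0, ∀ (x : X) (s u : ℝ), |s| ≤ C → |u| ≤ C → |s - u| ≤ η →
      dist (φ s x) (φ u x) < ε := by
  obtain ⟨η, hη, h⟩ := hφ.exists_pos_dist_apply_lt C ε hε
  exact ⟨η, hη, fun x s u hs hu hsu => h x x s u hs hu (by simpa using hη.le) hsu⟩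

theorem exists_pos_dist_apply_self_lt (hφ : IsFlow X φ) (ε : ℝ) (hε : 0 < ε) :
    ∃ θ > 0, ∀ (x : X) (s : ℝ), |s| ≤ θ → dist (φ s x) x < ε := by
  obtain ⟨η, hη, h⟩ := hφ.exists_pos_dist_apply_lt_of_abs_sub_le 1 ε hε
  refine ⟨min η 1, by positivity, fun x s hs => ?_⟩
  have := h x s 0 (hs.trans (min_le_right _ _)) (by simp)
    (by simpa using hs.trans (min_le_left _ _))
  rwa [hφ.map_zero] at this

theorem exists_uniform_displacement (hφ : IsFlow X φ) (hfix : ∀ x : X, ¬ IsFixedPoint φ x) :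
    ∃ T ρ : ℝ, 0 < ρ ∧ ∀ z : X, ∃ τ, |τ| ≤ T ∧ 2 * ρ ≤ dist (φ τ z) z := by
  rcases isEmpty_or_nonempty X with hX | hX
  · exact ⟨0, 1, one_pos, fun z => isEmptyElim z⟩
  have hpt : ∀ x : X, ∃ τ ρ : ℝ, 0 < ρ ∧ 2 * ρ < dist (φ τ x) x := by
    intro x
    obtain ⟨τ, hτ⟩ : ∃ τ, φ τ x ≠ x := not_forall.mp (hfix x)
    have hd : 0 < dist (φ τ x) x := dist_pos.mpr hτ
    exact ⟨τ, dist (φ τ x) x / 4, by positivity, by linarith⟩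
  choose τ ρ hρ hτρ using hpt
  obtain ⟨N, z, hz⟩ := exists_fin_cover_of_isOpen
    (fun x => isOpen_lt continuous_const ((hφ.continuous_timeMap (τ x)).dist continuous_id)) hτρ
  obtain ⟨i₀, -⟩ := hz hX.some
  refine ⟨∑ i, |τ (z i)|, Finset.univ.inf' ⟨i₀, Finset.mem_univ _⟩ (ρ ∘ z),
    (Finset.lt_inf'_iff _).mpr fun i _ => hρ (z i), fun y => ?_⟩
  obtain ⟨i, hi⟩ := hz y
  refine ⟨τ (z i), Finset.single_le_sum (fun j _ => abs_nonneg (τ (z j))) (Finset.mem_univ i), ?_⟩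
  have hle : Finset.univ.inf' _ (ρ ∘ z) ≤ ρ (z i) := Finset.inf'_le _ (Finset.mem_univ i)
  have hi' : 2 * ρ (z i) < dist (φ (τ (z i)) y) y := hi
  linarith

end Compact

end IsFlow

section OrbitDistIntegral

variable [MetricSpace X] {φ : ℝ → X → X}

/-- The property that makes `orbitDistIntegral φ z τ` increase at rate at least `ρ` along orbit
segments in the closed `R`-ball about `z`. -/
def IsEscapeTime (φ : ℝ → X → X) (ρ R : ℝ) (z : X) (τ : ℝ) : Prop :=
  ∀ u : X, dist u z ≤ R → dist u z + ρ ≤ dist (φ τ u) z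

theorem IsFlow.exists_pos_isEscapeTime [CompactSpace X] (hφ : IsFlow X φ) (T : ℝ) {ρ : ℝ}
    (hρ : 0 < ρ) : ∃ R > 0, ∀ (z : X) (τ : ℝ), |τ| ≤ T → 2 * ρ ≤ dist (φ τ z) z →
      IsEscapeTime φ ρ R z τ := by
  obtain ⟨η, hη, hclose⟩ := hφ.exists_pos_dist_apply_lt_of_dist_le T (ρ / 2) (by positivity)
  refine ⟨min η (ρ / 4), by positivity, fun z τ hτ hz u hu => ?_⟩
  have h1 := hclose u z (hu.trans (min_le_left _ _)) τ hτ
  have h2 := dist_triangle_left (φ τ z) z (φ τ u)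
  linarith [min_le_right η (ρ / 4)]

noncomputable def orbitDistIntegral (φ : ℝ → X → X) (z : X) (τ : ℝ) (y : X) : ℝ :=
  ∫ s in (0 : ℝ)..τ, dist (φ s y) z

theorem IsFlow.orbitDistIntegral_apply (hφ : IsFlow X φ) (z : X) (τ t : ℝ) (y : X) :
    orbitDistIntegral φ z τ (φ t y) = ∫ s in t..t + τ, dist (φ s y) z := by
  simp_rw [orbitDistIntegral, ← hφ.map_add]
  rw [intervalIntegral.integral_comp_add_right (fun s => dist (φ s y) z), zero_add, add_comm]

theorem IsFlow.abs_orbitDistIntegral_sub_le (hφ : IsFlow X φ) (z : X) (τ : ℝ) {y y' : X}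
    {B : ℝ} (hB : ∀ s, |s| ≤ |τ| → dist (φ s y) (φ s y') ≤ B) :
    |orbitDistIntegral φ z τ y - orbitDistIntegral φ z τ y'| ≤ B * |τ| := by
  have hint : ∀ y, IntervalIntegrable (fun s => dist (φ s y) z) MeasureTheory.volume 0 τ :=
    fun y => ((hφ.continuous_orbit y).dist continuous_const).intervalIntegrable 0 τ
  rw [orbitDistIntegral, orbitDistIntegral, ← intervalIntegral.integral_sub (hint y) (hint y'),
    ← Real.norm_eq_abs]
  refine (intervalIntegral.norm_integral_le_of_norm_le_const fun s hs => ?_).trans_eq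
    (by rw [sub_zero])
  rw [Real.norm_eq_abs]
  exact (abs_dist_sub_le _ _ _).trans
    (hB s (by simpa using abs_sub_left_of_mem_uIcc (uIoc_subset_uIcc hs)))

theorem IsFlow.exists_pos_abs_orbitDistIntegral_sub_le [CompactSpace X] (hφ : IsFlow X φ)
    (T ε : ℝ) (hε : 0 < ε) : ∃ η > 0, ∀ (z : X) (τ : ℝ), |τ| ≤ T → ∀ y y' : X, dist y y' ≤ η →
      |orbitDistIntegral φ z τ y - orbitDistIntegral φ z τ y'| ≤ ε := by
  obtain ⟨η, hη, hclose⟩ :=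
    hφ.exists_pos_dist_apply_lt_of_dist_le T (ε / (|T| + 1)) (by positivity)
  refine ⟨η, hη, fun z τ hτ y y' hyy' => ?_⟩
  calc _ ≤ ε / (|T| + 1) * |τ| :=
        hφ.abs_orbitDistIntegral_sub_le z τ fun s hs => (hclose y y' hyy' s (hs.trans hτ)).le
    _ ≤ ε / (|T| + 1) * (|T| + 1) := by gcongr; linarith [le_abs_self T]
    _ = ε := div_mul_cancel₀ _ (by positivity)

theorem IsFlow.continuous_orbitDistIntegral [CompactSpace X] (hφ : IsFlow X φ) (z : X) (τ : ℝ) :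
    Continuous (orbitDistIntegral φ z τ) := by
  refine Metric.continuous_iff.mpr fun y ε hε => ?_
  obtain ⟨η, hη, h⟩ := hφ.exists_pos_abs_orbitDistIntegral_sub_le |τ| (ε / 2) (half_pos hε)
  exact ⟨η, hη, fun y' hy' => (h z τ le_rfl y' y hy'.le).trans_lt (half_lt_self hε)⟩

variable {ρ R : ℝ} {z : X} {τ : ℝ}

theorem IsFlow.orbitDistIntegral_add_mul_le (hφ : IsFlow X φ) (hesc : IsEscapeTime φ ρ R z τ)
    {y : X} {a b : ℝ} (hab : a ≤ b) (hseg : ∀ s ∈ Icc a b, dist (φ s y) z ≤ R) :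
    orbitDistIntegral φ z τ (φ a y) + ρ * (b - a) ≤ orbitDistIntegral φ z τ (φ b y) := by
  set g : ℝ → ℝ := fun s => dist (φ s y) z
  have hg : Continuous g := (hφ.continuous_orbit y).dist continuous_const
  have hg' : Continuous fun s => g (s + τ) := hg.comp (continuous_add_const τ)
  have hint : ∀ c d, IntervalIntegrable g MeasureTheory.volume c d :=
    fun c d => hg.intervalIntegrable c d
  have hdiff : orbitDistIntegral φ z τ (φ b y) - orbitDistIntegral φ z τ (φ a y)
      = ∫ s in a..b, (g (s + τ) - g s) := by
    rw [hφ.orbitDistIntegral_apply, hφ.orbitDistIntegral_apply,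
      intervalIntegral.integral_interval_sub_interval_comm' (hint _ _) (hint _ _) (hint _ _),
      intervalIntegral.integral_sub (hg'.intervalIntegrable a b) (hint a b),
      intervalIntegral.integral_comp_add_right g τ]
  have hrate : ∫ _ in a..b, ρ ≤ ∫ s in a..b, (g (s + τ) - g s) := by
    refine intervalIntegral.integral_mono_on hab intervalIntegrable_const
      ((hg'.sub hg).intervalIntegrable a b) fun s hs => ?_
    have := hesc (φ s y) (hseg s hs)
    rw [← hφ.map_add, add_comm τ s] at this
    simp only [g]
    linarith
  rw [intervalIntegral.integral_const, smul_eq_mul] at hrate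
  linarith

theorem IsFlow.mul_abs_sub_le_abs_orbitDistIntegral_sub (hφ : IsFlow X φ)
    (hesc : IsEscapeTime φ ρ R z τ) {y : X} {a b : ℝ}
    (hseg : ∀ s ∈ uIcc a b, dist (φ s y) z ≤ R) :
    ρ * |b - a| ≤ |orbitDistIntegral φ z τ (φ b y) - orbitDistIntegral φ z τ (φ a y)| := by
  rcases le_total a b with hab | hba
  · have := hφ.orbitDistIntegral_add_mul_le hesc hab (by rwa [uIcc_of_le hab] at hseg)
    rw [abs_of_nonneg (sub_nonneg.mpr hab)]
    exact (by linarith : ρ * (b - a) ≤ _).trans (le_abs_self _)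
  · have := hφ.orbitDistIntegral_add_mul_le hesc hba (by rwa [uIcc_of_ge hba] at hseg)
    rw [abs_of_nonpos (sub_nonpos.mpr hba), abs_sub_comm]
    exact (by linarith : ρ * -(b - a) ≤ _).trans (le_abs_self _)

end OrbitDistIntegral

section LocalSection

variable [MetricSpace X] {φ : ℝ → X → X}

def localSection (φ : ℝ → X → X) (z : X) (τ r : ℝ) : Set X :=
  {w | dist w z ≤ r ∧ orbitDistIntegral φ z τ w = orbitDistIntegral φ z τ z}

theorem IsFlow.isClosed_localSection [CompactSpace X] (hφ : IsFlow X φ) (z : X) (τ r : ℝ) :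
    IsClosed (localSection φ z τ r) :=
  (isClosed_le (continuous_id.dist continuous_const) continuous_const).inter
    (isClosed_eq (hφ.continuous_orbitDistIntegral z τ) continuous_const)

variable {ρ R r : ℝ} {z : X} {τ : ℝ}

theorem IsFlow.abs_sub_le_of_apply_mem_localSection (hφ : IsFlow X φ)
    (hesc : IsEscapeTime φ ρ R z τ) (hρ : 0 < ρ) {y : X} {a b ε : ℝ}
    (hb : φ b y ∈ localSection φ z τ r)
    (ha : |orbitDistIntegral φ z τ (φ a y) - orbitDistIntegral φ z τ z| ≤ ρ * ε)
    (hseg : ∀ s ∈ uIcc a b, dist (φ s y) z ≤ R) : |b - a| ≤ ε := by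
  have h := hφ.mul_abs_sub_le_abs_orbitDistIntegral_sub hesc hseg
  rw [hb.2, abs_sub_comm (orbitDistIntegral φ z τ z)] at h
  exact le_of_mul_le_mul_left (h.trans ha) hρ

theorem IsFlow.eq_zero_of_apply_mem_localSection (hφ : IsFlow X φ)
    (hesc : IsEscapeTime φ ρ R z τ) (hρ : 0 < ρ) {w : X} {c : ℝ}
    (hw : w ∈ localSection φ z τ r) (hc : φ c w ∈ localSection φ z τ r)
    (hseg : ∀ s ∈ uIcc 0 c, dist (φ s w) z ≤ R) : c = 0 := by
  have h := hφ.abs_sub_le_of_apply_mem_localSection hesc hρ (ε := 0) hc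
    (by rw [hφ.map_zero, hw.2, sub_self, abs_zero, mul_zero]) hseg
  simpa using h

theorem IsFlow.exists_apply_mem_localSection [CompactSpace X] (hφ : IsFlow X φ)
    (hesc : IsEscapeTime φ ρ R z τ) (hrR : r ≤ R) {w : X} {θ : ℝ} (hθ : 0 ≤ θ)
    (hw : |orbitDistIntegral φ z τ w - orbitDistIntegral φ z τ z| ≤ ρ * θ)
    (hseg : ∀ s ∈ Icc (-θ) θ, dist (φ s w) z ≤ r) :
    ∃ c ∈ Icc (-θ) θ, φ c w ∈ localSection φ z τ r := by
  have hR : ∀ s ∈ Icc (-θ) θ, dist (φ s w) z ≤ R := fun s hs => (hseg s hs).trans hrR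
  have hback := hφ.orbitDistIntegral_add_mul_le hesc (neg_nonpos.mpr hθ)
    fun s hs => hR s ⟨hs.1, hs.2.trans hθ⟩
  have hfwd := hφ.orbitDistIntegral_add_mul_le hesc hθ
    fun s hs => hR s ⟨(neg_nonpos.mpr hθ).trans hs.1, hs.2⟩
  rw [hφ.map_zero] at hback hfwd
  have hw' := abs_le.mp hw
  obtain ⟨c, hc, hVc⟩ := intermediate_value_Icc (neg_le_self hθ)
    ((hφ.continuous_orbitDistIntegral z τ).comp (hφ.continuous_orbit w)).continuousOn
    (show orbitDistIntegral φ z τ z ∈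
      Icc (orbitDistIntegral φ z τ (φ (-θ) w)) (orbitDistIntegral φ z τ (φ θ w)) from
      ⟨by linarith, by linarith⟩)
  exact ⟨c, hc, hseg c hc, hVc⟩

theorem IsFlow.exists_localSection_cover [CompactSpace X] (hφ : IsFlow X φ) {T : ℝ}
    (hρ : 0 < ρ) (hesc : ∀ z : X, ∃ τ, |τ| ≤ T ∧ IsEscapeTime φ ρ R z τ) (hr : 0 < r)
    (hrR : r ≤ R) {θ : ℝ} (hθ : 0 < θ) :
    ∃ (N : ℕ) (z : Fin N → X) (τ : Fin N → ℝ),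
      (∀ i, |τ i| ≤ T ∧ IsEscapeTime φ ρ R (z i) (τ i)) ∧
      ∀ y : X, ∃ i, ∃ c ∈ Icc (-θ) θ, φ c y ∈ localSection φ (z i) (τ i) r := by
  obtain ⟨θ₁, hθ₁, hmove⟩ := hφ.exists_pos_dist_apply_self_lt (r / 2) (half_pos hr)
  obtain ⟨η, hη, hV⟩ :=
    hφ.exists_pos_abs_orbitDistIntegral_sub_le T (ρ * min θ θ₁) (by positivity)
  choose τ hτT hτ using hesc
  obtain ⟨N, z, hz⟩ := exists_fin_cover_of_isOpen (U := fun x : X => Metric.ball x (min η (r / 2)))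
    (fun _ => Metric.isOpen_ball) fun _ => Metric.mem_ball_self (by positivity)
  refine ⟨N, z, τ ∘ z, fun i => ⟨hτT (z i), hτ (z i)⟩, fun y => ?_⟩
  obtain ⟨i, hi⟩ := hz y
  have hyz : dist y (z i) ≤ min η (r / 2) := (Metric.mem_ball.mp hi).le
  obtain ⟨c, hc, hmem⟩ := hφ.exists_apply_mem_localSection (hτ (z i)) hrR (by positivity)
    (hV (z i) _ (hτT (z i)) y (z i) (hyz.trans (min_le_left _ _))) fun s hs => by
      have h1 := hmove y s ((abs_le.mpr hs).trans (min_le_right _ _))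
      linarith [dist_triangle (φ s y) y (z i), min_le_right η (r / 2)]
  exact ⟨i, c, Icc_subset_Icc (neg_le_neg (min_le_left _ _)) (min_le_left _ _) hc, hmem⟩

end LocalSection

section CrossSection

variable [MetricSpace X] {φ : ℝ → X → X}

structure IsCrossSectionFamily (φ : ℝ → X → X) (β γ e : ℝ) {N : ℕ} (K : Fin N → Set X) :
    Prop where
  isClosed : ∀ i, IsClosed (K i)
  exists_forward : ∀ y, ∃ i, ∃ Δ ∈ Icc β (3 * β), φ Δ y ∈ K i
  exists_backward : ∀ y, ∃ i, ∃ Δ ∈ Icc β (3 * β), φ (-Δ) y ∈ K i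
  eq_zero_of_apply_mem : ∀ i w c, w ∈ K i → φ c w ∈ K i → |c| ≤ 2 * β → c = 0
  dist_le : ∀ i, ∀ w ∈ K i, ∀ w' ∈ K i, dist w w' ≤ γ
  abs_sub_le : ∀ i j w w' Δ Δ', w ∈ K i → w' ∈ K i → φ Δ w ∈ K j → φ Δ' w' ∈ K j →
    Δ ∈ Icc β (3 * β) → Δ' ∈ Icc β (3 * β) → |Δ' - Δ| ≤ e

theorem IsFlow.isCrossSectionFamily_localSection [CompactSpace X] (hφ : IsFlow X φ) {N : ℕ}
    {z : Fin N → X} {τ : Fin N → ℝ} {ρ R r β γ e : ℝ} (hρ : 0 < ρ) (hβ : 0 < β)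
    (hesc : ∀ i, IsEscapeTime φ ρ R (z i) (τ i))
    (hcover : ∀ y, ∃ i, ∃ c ∈ Icc (-(β / 2)) (β / 2), φ c y ∈ localSection φ (z i) (τ i) r)
    (hmove : ∀ x s, |s| ≤ 2 * β → dist (φ s x) x < R / 2) (hrR : r ≤ R / 4) (hrγ : 2 * r ≤ γ)
    (hclose : ∀ w w', dist w w' ≤ 2 * r → ∀ Δ, |Δ| ≤ 3 * β → dist (φ Δ w) (φ Δ w') ≤ R / 4 ∧
      ∀ i, |orbitDistIntegral φ (z i) (τ i) (φ Δ w) - orbitDistIntegral φ (z i) (τ i) (φ Δ w')|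
        ≤ ρ * e) :
    IsCrossSectionFamily φ β γ e fun i => localSection φ (z i) (τ i) r := by
  have hstay : ∀ y z, dist y z ≤ R / 2 → ∀ s, |s| ≤ 2 * β → dist (φ s y) z ≤ R :=
    fun y z hyz s hs => by linarith [hmove y s hs, dist_triangle (φ s y) y z]
  have hdiam : ∀ i, ∀ w ∈ localSection φ (z i) (τ i) r, ∀ w' ∈ localSection φ (z i) (τ i) r,
      dist w w' ≤ 2 * r := fun i w hw w' hw' => by
    linarith [dist_triangle_right w w' (z i), hw.1, hw'.1]
  refine
    { isClosed := fun i => hφ.isClosed_localSection _ _ _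
      exists_forward := fun y => ?_
      exists_backward := fun y => ?_
      eq_zero_of_apply_mem := fun i w c hw hc hcβ => ?_
      dist_le := fun i w hw w' hw' => (hdiam i w hw w' hw').trans hrγ
      abs_sub_le := fun i j w w' Δ Δ' hw hw' hΔ hΔ' hΔβ hΔβ' => ?_ }
  · obtain ⟨i, c, hc, hmem⟩ := hcover (φ (2 * β) y)
    refine ⟨i, c + 2 * β, ⟨by linarith [hc.1], by linarith [hc.2]⟩, ?_⟩
    rwa [hφ.map_add]
  · obtain ⟨i, c, hc, hmem⟩ := hcover (φ (-(2 * β)) y)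
    refine ⟨i, 2 * β - c, ⟨by linarith [hc.2], by linarith [hc.1]⟩, ?_⟩
    rwa [neg_sub, sub_eq_add_neg, hφ.map_add]
  · have hwz : dist w (z i) ≤ r := hw.1
    refine hφ.eq_zero_of_apply_mem_localSection (hesc i) hρ hw hc fun s hs =>
      hstay w (z i) (by linarith [dist_nonneg (x := w) (y := z i)]) s ?_
    simpa using (abs_sub_left_of_mem_uIcc hs).trans (by simpa using hcβ)
  · obtain ⟨hnear, hnearV⟩ := hclose w' w (hdiam i w' hw' w hw) Δ
      (abs_le.mpr ⟨by linarith [hΔβ.1], hΔβ.2⟩)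
    have hV := hnearV j
    rw [hΔ.2] at hV
    refine hφ.abs_sub_le_of_apply_mem_localSection (hesc j) hρ hΔ' hV fun s hs => ?_
    rw [← hφ.apply_sub_apply Δ s w']
    refine hstay _ _ (by linarith [dist_triangle (φ Δ w') (φ Δ w) (z j), hΔ.1]) _
      ((abs_sub_left_of_mem_uIcc hs).trans ?_)
    exact abs_le.mpr ⟨by linarith [hΔβ.2, hΔβ'.1], by linarith [hΔβ.1, hΔβ'.2]⟩

theorem IsFlow.exists_isCrossSectionFamily [CompactSpace X] (hφ : IsFlow X φ)
    (hfix : ∀ x : X, ¬ IsFixedPoint φ x) :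
    ∃ β > 0, ∀ γ > 0, ∀ e > 0, ∃ (N : ℕ) (K : Fin N → Set X), IsCrossSectionFamily φ β γ e K := by
  obtain ⟨T, ρ, hρ, hdisp⟩ := hφ.exists_uniform_displacement hfix
  obtain ⟨R, hR, hesc⟩ := hφ.exists_pos_isEscapeTime T hρ
  obtain ⟨θ, hθ, hmove⟩ := hφ.exists_pos_dist_apply_self_lt (R / 2) (half_pos hR)
  refine ⟨θ / 2, half_pos hθ, fun γ hγ e he => ?_⟩
  obtain ⟨ηV, hηV, hV⟩ := hφ.exists_pos_abs_orbitDistIntegral_sub_le T (ρ * e) (by positivity)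
  obtain ⟨η, hη, hclose⟩ :=
    hφ.exists_pos_dist_apply_lt_of_dist_le (3 * (θ / 2)) (min ηV (R / 4)) (by positivity)
  set r := min (γ / 2) (min (η / 2) (R / 4))
  have hrγ : r ≤ γ / 2 := min_le_left _ _
  have hrη : r ≤ η / 2 := (min_le_right _ _).trans (min_le_left _ _)
  have hrR : r ≤ R / 4 := (min_le_right _ _).trans (min_le_right _ _)
  obtain ⟨N, z, τ, hτ, hcover⟩ := hφ.exists_localSection_cover hρ
    (fun z => let ⟨τ, hτT, hτ⟩ := hdisp z; ⟨τ, hτT, hesc z τ hτT hτ⟩) (r := r) (by positivity)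
    (by linarith) (by positivity : 0 < θ / 2 / 2)
  refine ⟨N, _, hφ.isCrossSectionFamily_localSection hρ (half_pos hθ) (fun i => (hτ i).2)
    hcover (fun x s hs => hmove x s (by linarith)) hrR (by linarith) fun w w' hww' Δ hΔ => ?_⟩
  have hnear := (hclose w w' (by linarith) Δ hΔ).le
  exact ⟨hnear.trans (min_le_right _ _),
    fun i => hV (z i) (τ i) (hτ i).1 _ _ (hnear.trans (min_le_left _ _))⟩

end CrossSection

section Itinerary

variable {φ : ℝ → X → X} {β : ℝ} {N : ℕ} {K : Fin N → Set X}

structure IsItinerary (φ : ℝ → X → X) (β : ℝ) (K : Fin N → Set X) (q : ℤ → Fin N) (x : X)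
    (t : ℤ → ℝ) : Prop where
  zero : t 0 = 0
  gap_mem : ∀ n, t (n + 1) - t n ∈ Icc β (3 * β)
  mem : ∀ n, φ (t n) x ∈ K (q n)

theorem IsItinerary.shift [TopologicalSpace X] (hφ : IsFlow X φ) {q : ℤ → Fin N} {x : X}
    {t : ℤ → ℝ} (h : IsItinerary φ β K q x t) (m : ℤ) :
    IsItinerary φ β K (fun n => q (n + m)) (φ (t m) x) (fun n => t (n + m) - t m) where
  zero := by simp
  gap_mem n := by simpa [add_right_comm n 1 m] using h.gap_mem (n + m)
  mem n := by simpa [hφ.apply_sub_apply] using h.mem (n + m)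

theorem exists_nat_crossings {ψ : ℝ → X → X} (hψ0 : ∀ y, ψ 0 y = y)
    (hψ : ∀ s t y, ψ (s + t) y = ψ s (ψ t y))
    (hit : ∀ y, ∃ i, ∃ Δ ∈ Icc β (3 * β), ψ Δ y ∈ K i) {w : X} {i₀ : Fin N} (hw : w ∈ K i₀) :
    ∃ (a : ℕ → ℝ) (c : ℕ → Fin N), a 0 = 0 ∧ (∀ m, a (m + 1) - a m ∈ Icc β (3 * β)) ∧
      ∀ m, ψ (a m) w ∈ K (c m) := by
  choose J D hD hJ using hit
  let a : ℕ → ℝ := fun m => Nat.rec 0 (fun _ am => am + D (ψ am w)) m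
  refine ⟨a, fun m => Nat.casesOn m i₀ fun k => J (ψ (a k) w), rfl,
    fun m => by simpa [a] using hD (ψ (a m) w), fun m => ?_⟩
  cases m with
  | zero => simpa [a, hψ0] using hw
  | succ k =>
    change ψ (a k + D (ψ (a k) w)) w ∈ K (J (ψ (a k) w))
    rw [add_comm, hψ]
    exact hJ _

theorem IsFlow.exists_isItinerary_of_mem [TopologicalSpace X] (hφ : IsFlow X φ)
    (hfwd : ∀ y, ∃ i, ∃ Δ ∈ Icc β (3 * β), φ Δ y ∈ K i)
    (hbwd : ∀ y, ∃ i, ∃ Δ ∈ Icc β (3 * β), φ (-Δ) y ∈ K i) {w : X} {i₀ : Fin N}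
    (hw : w ∈ K i₀) : ∃ q t, IsItinerary φ β K q w t := by
  obtain ⟨a, c, ha0, ha, hac⟩ := exists_nat_crossings hφ.map_zero hφ.map_add hfwd hw
  obtain ⟨b, c', hb0, hb, hbc⟩ := exists_nat_crossings (ψ := fun s => φ (-s))
    (by simpa using hφ.map_zero) (fun s t y => by rw [neg_add, hφ.map_add]) hbwd hw
  -- `Int.rec` splices the forward crossings (`n ≥ 0`) with the backward ones (`n < 0`).
  refine ⟨fun n => Int.rec c (fun m => c' (m + 1)) n,
    fun n => Int.rec a (fun m => -b (m + 1)) n, ⟨ha0, fun n => ?_, fun n => ?_⟩⟩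
  · rcases n with m | _ | k
    · exact ha m
    · show a 0 - -b (0 + 1) ∈ _
      simpa [ha0, hb0] using hb 0
    · show -b (k + 1) - -b (k + 1 + 1) ∈ _
      rw [neg_sub_neg]
      exact hb (k + 1)
  · rcases n with m | m
    · exact hac m
    · exact hbc (m + 1)

end Itinerary

section ItineraryMetric

variable [MetricSpace X] {φ : ℝ → X → X} {β : ℝ} {N : ℕ} {K : Fin N → Set X}

theorem IsFlow.isClosed_setOf_isItinerary (hφ : IsFlow X φ) (hK : ∀ i, IsClosed (K i)) :
    IsClosed {ω : (ℤ → Fin N) × X × (ℤ → ℝ) | IsItinerary φ β K ω.1 ω.2.1 ω.2.2} := by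
  have hmem : IsClosed {p : Fin N × X | p.2 ∈ K p.1} := by
    convert isClosed_iUnion_of_finite fun i => (isClosed_singleton (x := i)).prod (hK i)
    ext ⟨i, x⟩
    simp
  have ht : ∀ n, Continuous fun ω : (ℤ → Fin N) × X × (ℤ → ℝ) => ω.2.2 n := fun n => by fun_prop
  have hset : {ω : (ℤ → Fin N) × X × (ℤ → ℝ) | IsItinerary φ β K ω.1 ω.2.1 ω.2.2} =
      {ω | ω.2.2 0 = 0} ∩ (⋂ n, {ω | ω.2.2 (n + 1) - ω.2.2 n ∈ Icc β (3 * β)}) ∩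
        ⋂ n, {ω | (ω.1 n, φ (ω.2.2 n) ω.2.1) ∈ {p : Fin N × X | p.2 ∈ K p.1}} := by
    ext ω
    simp only [mem_inter_iff, mem_iInter, mem_ofPred_eq]
    exact ⟨fun h => ⟨⟨h.1, h.2⟩, h.3⟩, fun h => ⟨h.1.1, h.1.2, h.2⟩⟩
  rw [hset]
  refine ((isClosed_eq (ht 0) continuous_const).inter
    (isClosed_iInter fun n => isClosed_Icc.preimage ((ht _).sub (ht n)))).inter
    (isClosed_iInter fun n => hmem.preimage ?_)
  exact ((continuous_apply n).comp continuous_fst).prodMk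
    (hφ.cont.comp ((continuous_fst.comp continuous_snd).prodMk (ht n)))

theorem IsFlow.isCompact_setOf_isItinerary [CompactSpace X] (hφ : IsFlow X φ)
    (hK : ∀ i, IsClosed (K i)) :
    IsCompact {ω : (ℤ → Fin N) × X × (ℤ → ℝ) | IsItinerary φ β K ω.1 ω.2.1 ω.2.2} := by
  refine (isCompact_univ.prod (isCompact_univ.prod (isCompact_univ_pi fun n : ℤ =>
    isCompact_Icc (a := -(3 * β * |(n : ℝ)|)) (b := 3 * β * |(n : ℝ)|)))).of_isClosed_subset
    (hφ.isClosed_setOf_isItinerary hK) fun ω h => ⟨mem_univ _, mem_univ _, fun n _ => ?_⟩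
  refine abs_le.mp (abs_le_mul_abs_of_abs_sub_succ_le h.zero (fun k => abs_le.mpr ?_) n)
  have := h.gap_mem k
  constructor <;> linarith [this.1, this.2]

end ItineraryMetric

namespace IsCrossSectionFamily

variable [MetricSpace X] {φ : ℝ → X → X} {β γ e : ℝ} {N : ℕ} {K : Fin N → Set X}

theorem eq_of_apply_mem (hK : IsCrossSectionFamily φ β γ e K) (hφ : IsFlow X φ) {x : X}
    {a b : ℝ} {i : Fin N} (ha : φ a x ∈ K i) (hb : φ b x ∈ K i) (hab : |b - a| ≤ 2 * β) :
    a = b := by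
  have := hK.eq_zero_of_apply_mem i _ (b - a) ha (by rwa [hφ.apply_sub_apply]) hab
  linarith

theorem eq_of_isItinerary (hK : IsCrossSectionFamily φ β γ e K) (hφ : IsFlow X φ)
    {q : ℤ → Fin N} {x : X} {t t' : ℤ → ℝ} (h : IsItinerary φ β K q x t)
    (h' : IsItinerary φ β K q x t') : t = t' := by
  funext n
  induction n using Int.induction_on with
  | zero => rw [h.zero, h'.zero]
  | succ n ih =>
    refine hK.eq_of_apply_mem hφ (h.mem (n + 1)) (h'.mem (n + 1)) (abs_le.mpr ⟨?_, ?_⟩) <;>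
      linarith [(h.gap_mem n).1, (h.gap_mem n).2, (h'.gap_mem n).1, (h'.gap_mem n).2]
  | pred n ih =>
    have hg := h.gap_mem (-n - 1)
    have hg' := h'.gap_mem (-n - 1)
    rw [sub_add_cancel] at hg hg'
    refine hK.eq_of_apply_mem hφ (h.mem (-n - 1)) (h'.mem (-n - 1)) (abs_le.mpr ⟨?_, ?_⟩) <;>
      linarith [hg.1, hg.2, hg'.1, hg'.2]

variable {δ : ℝ}

theorem dist_apply_transit_lt (hK : IsCrossSectionFamily φ β γ e K) (hβ : 0 < β)
    (hγ : ∀ y y', dist y y' ≤ γ → ∀ a, |a| ≤ 3 * β → dist (φ a y) (φ a y') < δ / 2)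
    (he : ∀ y a b, |a| ≤ 3 * β → |b| ≤ 3 * β → |a - b| ≤ e → dist (φ a y) (φ b y) < δ / 2)
    {i j : Fin N} {w w' : X} {g g' a : ℝ} (hw : w ∈ K i) (hw' : w' ∈ K i)
    (hgw : φ g w ∈ K j) (hgw' : φ g' w' ∈ K j) (hg : g ∈ Icc β (3 * β))
    (hg' : g' ∈ Icc β (3 * β)) (ha : a ∈ Icc 0 g) :
    dist (φ a w) (φ (a / g * g') w') < δ := by
  have hpos : 0 < g := hβ.trans_le hg.1
  have hfrac : a / g ∈ Icc 0 1 := ⟨div_nonneg ha.1 hpos.le, (div_le_one hpos).mpr ha.2⟩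
  have ha3 : |a| ≤ 3 * β := abs_le.mpr ⟨by linarith [ha.1], by linarith [ha.2, hg.2]⟩
  have hb3 : |a / g * g'| ≤ 3 * β := by
    rw [abs_of_nonneg (mul_nonneg hfrac.1 (by linarith [hg'.1]))]
    nlinarith [hfrac.1, hfrac.2, hg'.1, hg'.2]
  have hab : |a - a / g * g'| ≤ e :=
    (abs_sub_div_mul_le hpos ha).trans (hK.abs_sub_le i j w w' g g' hw hw' hgw hgw' hg hg')
  calc dist (φ a w) (φ (a / g * g') w')
      ≤ dist (φ a w) (φ a w') + dist (φ a w') (φ (a / g * g') w') := dist_triangle _ _ _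
    _ < δ / 2 + δ / 2 :=
        add_lt_add (hγ w w' (hK.dist_le i w hw w' hw') a ha3) (he w' _ _ ha3 hb3 hab)
    _ = δ := add_halves δ

theorem exists_reparam_dist_lt (hK : IsCrossSectionFamily φ β γ e K) (hφ : IsFlow X φ)
    (hβ : 0 < β)
    (hγ : ∀ y y', dist y y' ≤ γ → ∀ a, |a| ≤ 3 * β → dist (φ a y) (φ a y') < δ / 2)
    (he : ∀ y a b, |a| ≤ 3 * β → |b| ≤ 3 * β → |a - b| ≤ e → dist (φ a y) (φ b y) < δ / 2)
    {q : ℤ → Fin N} {x x' : X} {t t' : ℤ → ℝ} (h : IsItinerary φ β K q x t)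
    (h' : IsItinerary φ β K q x' t') :
    ∃ s : ℝ → ℝ, Continuous s ∧ s 0 = 0 ∧ ∀ u, dist (φ u x) (φ (s u) x') < δ := by
  obtain ⟨s, hs, hsL⟩ := exists_continuous_eqOn_affineStep hβ (fun n => (h.gap_mem n).1)
    fun n => (h'.gap_mem n).1
  refine ⟨s, hs, ?_, fun u => ?_⟩
  · have := hsL 0 ⟨le_rfl, by linarith [(h.gap_mem 0).1]⟩
    rwa [affineStep_self, h.zero, h'.zero] at this
  obtain ⟨n, hn⟩ := exists_mem_Ico_of_le_sub_succ hβ (fun n => (h.gap_mem n).1) u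
  rw [← hφ.apply_sub_apply (t n) u x, ← hφ.apply_sub_apply (t' n) (s u) x', hsL n hn,
    affineStep, add_sub_cancel_left]
  exact hK.dist_apply_transit_lt hβ hγ he (h.mem n) (h'.mem n)
    (by rw [hφ.apply_sub_apply]; exact h.mem (n + 1))
    (by rw [hφ.apply_sub_apply]; exact h'.mem (n + 1)) (h.gap_mem n) (h'.gap_mem n)
    ⟨sub_nonneg.mpr hn.1, sub_le_sub_right hn.2.le _⟩

theorem isItinerary_unique (hK : IsCrossSectionFamily φ β γ e K) (hφ : IsFlow X φ)
    (hβ : 0 < β)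
    (hexp : ∀ (x y : X) (s : ℝ → ℝ), Continuous s → s 0 = 0 →
      (∀ u, dist (φ u x) (φ (s u) y) < δ) → ∃ c, |c| < 2 * β ∧ y = φ c x)
    (hγ : ∀ y y', dist y y' ≤ γ → ∀ a, |a| ≤ 3 * β → dist (φ a y) (φ a y') < δ / 2)
    (he : ∀ y a b, |a| ≤ 3 * β → |b| ≤ 3 * β → |a - b| ≤ e → dist (φ a y) (φ b y) < δ / 2)
    {q : ℤ → Fin N} {x x' : X} {t t' : ℤ → ℝ} (h : IsItinerary φ β K q x t)
    (h' : IsItinerary φ β K q x' t') : x = x' ∧ t = t' := by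
  obtain ⟨s, hs, hs0, hsd⟩ := hK.exists_reparam_dist_lt hφ hβ hγ he h h'
  obtain ⟨c, hc, rfl⟩ := hexp x x' s hs hs0 hsd
  have hx : x ∈ K (q 0) := by simpa [h.zero, hφ.map_zero] using h.mem 0
  have hx' : φ c x ∈ K (q 0) := by simpa [h'.zero, hφ.map_zero] using h'.mem 0
  obtain rfl := hK.eq_zero_of_apply_mem _ x c hx hx' hc.le
  rw [hφ.map_zero] at h' ⊢
  exact ⟨rfl, hK.eq_of_isItinerary hφ h h'⟩

theorem exists_isItinerary_apply_eq (hK : IsCrossSectionFamily φ β γ e K) (hφ : IsFlow X φ)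
    (hβ : 0 < β) (x : X) :
    ∃ q x₀ t, IsItinerary φ β K q x₀ t ∧ ∃ u ∈ Icc 0 (t 1), φ u x₀ = x := by
  obtain ⟨i₀, Δ, -, hmem⟩ := hK.exists_backward x
  obtain ⟨q, t, ht⟩ := hφ.exists_isItinerary_of_mem hK.exists_forward hK.exists_backward hmem
  obtain ⟨m, hm⟩ := exists_mem_Ico_of_le_sub_succ hβ (fun n => (ht.gap_mem n).1) Δ
  refine ⟨_, _, _, ht.shift hφ m, Δ - t m, ⟨sub_nonneg.mpr hm.1, ?_⟩, ?_⟩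
  · rw [add_comm 1 m]
    linarith [hm.2]
  · rw [hφ.apply_sub_apply, ← hφ.map_add, add_neg_cancel, hφ.map_zero]

theorem exists_suspension_factor [CompactSpace X] [Nonempty X]
    (hK : IsCrossSectionFamily φ β γ e K) (hφ : IsFlow X φ) (hβ : 0 < β)
    (huniq : ∀ {q : ℤ → Fin N} {x x' : X} {t t' : ℤ → ℝ}, IsItinerary φ β K q x t →
      IsItinerary φ β K q x' t' → x = x' ∧ t = t') :
    ∃ (Λ : Set (ℤ → Fin N)) (f : (ℤ → Fin N) → ℝ) (p : (ℤ → Fin N) → X),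
      IsClosed Λ ∧
      (∀ q : ℤ → Fin N, q ∈ Λ ↔ (fun i => q (i + 1)) ∈ Λ) ∧
      ContinuousOn f Λ ∧ (∀ q ∈ Λ, 0 < f q) ∧
      ContinuousOn p Λ ∧
      (∀ q ∈ Λ, φ (f q) (p q) = p (fun i => q (i + 1))) ∧
      (∀ x : X, ∃ q ∈ Λ, ∃ t : ℝ, 0 ≤ t ∧ t ≤ f q ∧ φ t (p q) = x) := by
  set Ω := {ω : (ℤ → Fin N) × X × (ℤ → ℝ) | IsItinerary φ β K ω.1 ω.2.1 ω.2.2}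
  have hΩ : IsCompact Ω := hφ.isCompact_setOf_isItinerary hK.isClosed
  have hΛ : ∀ {q x t}, IsItinerary φ β K q x t → q ∈ Prod.fst '' Ω :=
    fun {q x t} h => ⟨(q, x, t), h, rfl⟩
  have hF : ∀ q ∈ Prod.fst '' Ω, ∃ w : X × (ℤ → ℝ), IsItinerary φ β K q w.1 w.2 := by
    rintro _ ⟨⟨q, w⟩, hw, rfl⟩
    exact ⟨w, hw⟩
  choose! F hF using hF
  have hFeq : ∀ {q x t}, IsItinerary φ β K q x t → F q = (x, t) := fun h => by
    obtain ⟨hx, ht⟩ := huniq (hF _ (hΛ h)) h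
    rw [← hx, ← ht]
  have hFcont : ContinuousOn F (Prod.fst '' Ω) :=
    continuousOn_fst_image_of_isCompact hΩ fun q w hw => hFeq hw
  refine ⟨Prod.fst '' Ω, fun q => (F q).2 1, fun q => (F q).1,
    (hΩ.image continuous_fst).isClosed, fun q => ⟨fun hq => hΛ ((hF q hq).shift hφ 1),
      fun hq => hΛ (by simpa using (hF _ hq).shift hφ (-1))⟩,
    (continuous_apply 1).comp_continuousOn (continuous_snd.comp_continuousOn hFcont),
    fun q hq => ?_, continuous_fst.comp_continuousOn hFcont, fun q hq => ?_, fun x => ?_⟩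
  · have := ((hF q hq).gap_mem 0).1
    rw [zero_add, (hF q hq).zero] at this
    linarith
  · simpa using (congrArg Prod.fst (hFeq ((hF q hq).shift hφ 1))).symm
  · obtain ⟨q, x₀, t, h, u, hu, rfl⟩ := hK.exists_isItinerary_apply_eq hφ hβ x
    exact ⟨q, hΛ h, u, hu.1, by simpa [hFeq h] using hu.2, by simp [hFeq h]⟩

end IsCrossSectionFamily

/-- The factor map is `π (q, s) = φ s (p q)` on the suspension `Λ_f`; the last two conditions say
that `π` respects the identification `(q, f q) ∼ (σ q, 0)` and is onto. -/
theorem expansive_factor_of_symbolic_suspension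
    {X : Type*} [MetricSpace X] [CompactSpace X]
    (φ : ℝ → X → X) (hφ : IsFlow X φ) (hexp : IsExpansive φ)
    (hfix : ∀ x : X, ¬ IsFixedPoint φ x) :
    ∃ (N : ℕ) (Λ : Set (ℤ → Fin N)) (f : (ℤ → Fin N) → ℝ) (p : (ℤ → Fin N) → X),
      IsClosed Λ ∧
      (∀ q : ℤ → Fin N, q ∈ Λ ↔ (fun i => q (i + 1)) ∈ Λ) ∧
      ContinuousOn f Λ ∧ (∀ q ∈ Λ, 0 < f q) ∧
      ContinuousOn p Λ ∧
      (∀ q ∈ Λ, φ (f q) (p q) = p (fun i => q (i + 1))) ∧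
      (∀ x : X, ∃ q ∈ Λ, ∃ t : ℝ, 0 ≤ t ∧ t ≤ f q ∧ φ t (p q) = x) := by
  rcases isEmpty_or_nonempty X with hX | hX
  · exact ⟨0, ∅, fun _ => 1, fun q => (q 0).elim0, isClosed_empty, fun q => (q 0).elim0,
      continuousOn_empty _, fun q hq => hq.elim, continuousOn_empty _, fun q hq => hq.elim,
      fun x => isEmptyElim x⟩
  obtain ⟨β, hβ, hsections⟩ := hφ.exists_isCrossSectionFamily hfix
  obtain ⟨δ, hδ, hexpβ⟩ := hexp (2 * β) (by positivity)
  obtain ⟨γ, hγ, hγδ⟩ := hφ.exists_pos_dist_apply_lt_of_dist_le (3 * β) (δ / 2) (half_pos hδ)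
  obtain ⟨e, he, heδ⟩ := hφ.exists_pos_dist_apply_lt_of_abs_sub_le (3 * β) (δ / 2) (half_pos hδ)
  obtain ⟨N, K, hK⟩ := hsections γ hγ e he
  exact ⟨N, hK.exists_suspension_factor hφ hβ fun h h' =>
    hK.isItinerary_unique hφ hβ hexpβ hγδ heδ h h'⟩
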